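/- With the hypotheses of the H(m,G,k) construction, H(m,G,k) is distance-balanced (|W_{uv}| = |W_{vu}| for every edge uv) if and only if t_1 = t_2 = n_1 − k = n_2 − m. -/

import Mathlib

open SimpleGraph

/-- `wSet G u v` is the set of vertices strictly closer to `u` than to `v`. -/
def wSet {V : Type*} (G : SimpleGraph V) (u v : V) : Set V :=
  {x | G.dist x u < G.dist x v}

/-- `G` is quasi-`lam`-distance-balanced. -/
def QuasiDB {V : Type*} (G : SimpleGraph V) (lam : ℚ) : Prop :=
  ∀ u v : V, G.Adj u v →
    ((wSet G u v).ncard : ℚ) = lam * ((wSet G v u).ncard : ℚ) ∨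
    ((wSet G v u).ncard : ℚ) = lam * ((wSet G u v).ncard : ℚ)

/-- The graph `H(m, G, k)`: to a bipartite graph `G` with parts `β`, `γ`, add an
independent set `A` of `m` new vertices joined to every vertex of the part `β`,
and an independent set `D` of `k` new vertices joined to every vertex of the
part `γ`. -/
def Hmgk {β γ : Type*} (G : SimpleGraph (β ⊕ γ)) (m k : ℕ) :
    SimpleGraph (Fin m ⊕ (β ⊕ γ) ⊕ Fin k) where
  Adj x y :=
    match x, y with
    | .inl _, .inr (.inl (.inl _)) => True
    | .inr (.inl (.inl _)), .inl _ => True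
    | .inr (.inl u), .inr (.inl v) => G.Adj u v
    | .inr (.inr _), .inr (.inl (.inr _)) => True
    | .inr (.inl (.inr _)), .inr (.inr _) => True
    | _, _ => False
  symm := by
    constructor
    rintro (a | ((b | c) | d)) (a2 | ((b2 | c2) | d2)) h <;>
      simp_all [SimpleGraph.adj_comm]
  loopless := by
    constructor
    rintro (a | ((b | c) | d)) h <;> simp_all

/-- `G'` is distance-balanced: `|W_{uv}| = |W_{vu}|` for every edge `uv`. -/
def DistBalanced {V : Type*} (G : SimpleGraph V) : Prop :=
  ∀ u v : V, G.Adj u v → (wSet G u v).ncard = (wSet G v u).ncard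

/-!
Colour the vertices of `H(m, G, k)` by their layer `A = 0`, `B = 1`, `C = 2`, `D = 3`; every edge
joins consecutive layers, so the length of any walk has the parity of the difference of the layers
of its ends. Every two vertices are joined by a walk of length at most `3`, and hence the distance
between distinct non-adjacent vertices is `2` or `3` according to that parity. With all distances
known, the six sets `W_{ab}, W_{ba}, W_{bc}, W_{cb}, W_{cd}, W_{dc}` are counted directly, and the
three equalities of their sizes are linear equations in `t₁, t₂, n₁, n₂, m, k`.
-/

namespace SimpleGraph

variable {V : Type*} {G : SimpleGraph V}

theorem Walk.even_length_add_of_adj {f : V → ℕ}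
    (hf : ∀ ⦃x y⦄, G.Adj x y → f x + 1 = f y ∨ f y + 1 = f x) {x y : V} (p : G.Walk x y) :
    Even (p.length + f x + f y) := by
  induction p with
  | nil => simp
  | cons h p ih =>
    rw [Walk.length_cons]
    rcases hf h with h | h <;> grind

theorem Reachable.even_dist_add_of_adj {f : V → ℕ}
    (hf : ∀ ⦃x y⦄, G.Adj x y → f x + 1 = f y ∨ f y + 1 = f x) {x y : V}
    (hr : G.Reachable x y) : Even (G.dist x y + f x + f y) := by
  obtain ⟨p, hp⟩ := hr.exists_walk_length_eq_dist
  exact hp ▸ p.even_length_add_of_adj hf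

section Bipartite

variable {β γ : Type*} {G : SimpleGraph (β ⊕ γ)}

theorem exists_adj_inl_inr_of_ne_bot (hne : G ≠ ⊥)
    (hbipB : ∀ b b' : β, ¬ G.Adj (.inl b) (.inl b'))
    (hbipC : ∀ c c' : γ, ¬ G.Adj (.inr c) (.inr c')) :
    ∃ u v, G.Adj (.inl u) (.inr v) := by
  by_contra! h
  refine hne (edgeSet_eq_empty.1 (Set.eq_empty_iff_forall_notMem.2 ?_))
  rintro ⟨x | x, y | y⟩ hxy
  exacts [hbipB x y hxy, h x y hxy, h y x hxy.symm, hbipC x y hxy]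

variable [Fintype β] [Fintype γ] [DecidableRel G.Adj]

theorem degree_inl_eq_card_filter (hbipB : ∀ b b' : β, ¬ G.Adj (.inl b) (.inl b')) (u : β) :
    G.degree (.inl u) = (Finset.univ.filter fun v => G.Adj (.inl u) (.inr v)).card := by
  rw [← card_neighborFinset_eq_degree, neighborFinset_eq_filter, Finset.card_filter,
    Finset.card_filter, Fintype.sum_sum_type]
  simp [hbipB]

theorem degree_inr_eq_card_filter (hbipC : ∀ c c' : γ, ¬ G.Adj (.inr c) (.inr c')) (v : γ) :
    G.degree (.inr v) = (Finset.univ.filter fun u => G.Adj (.inl u) (.inr v)).card := by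
  rw [← card_neighborFinset_eq_degree, neighborFinset_eq_filter, Finset.card_filter,
    Finset.card_filter, Fintype.sum_sum_type]
  simp [hbipC, G.adj_comm (.inr v)]

theorem exists_adj_inr_of_degree_pos (hbipB : ∀ b b' : β, ¬ G.Adj (.inl b) (.inl b')) {u : β}
    (h : 0 < G.degree (.inl u)) : ∃ v, G.Adj (.inl u) (.inr v) := by
  obtain ⟨w | v, huw⟩ := (G.degree_pos_iff_exists_adj _).1 h
  exacts [(hbipB u w huw).elim, ⟨v, huw⟩]

theorem exists_adj_inl_of_degree_pos (hbipC : ∀ c c' : γ, ¬ G.Adj (.inr c) (.inr c')) {v : γ}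
    (h : 0 < G.degree (.inr v)) : ∃ u, G.Adj (.inl u) (.inr v) := by
  obtain ⟨u | w, hvw⟩ := (G.degree_pos_iff_exists_adj _).1 h
  exacts [⟨u, hvw.symm⟩, (hbipC v w hvw).elim]

end Bipartite

end SimpleGraph

namespace Finset

variable {α : Type*}

theorem natCast_card_filter_not (s : Finset α) (p : α → Prop) [DecidablePred p] :
    ((s.filter fun x => ¬ p x).card : ℤ) = s.card - (s.filter p).card := by
  rw [← card_filter_add_card_filter_not (s := s) p]
  push_cast
  ring

theorem sum_ite_zero_one (s : Finset α) (p : α → Prop) [DecidablePred p] :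
    ∑ x ∈ s, (if p x then 0 else 1 : ℤ) = s.card - (s.filter p).card := by
  rw [← natCast_card_filter_not, card_filter]
  push_cast
  simp [ite_not]

-- The decidability instances below are arbitrary arguments, so that these lemmas also fire on the
-- filters that `simp` produces from `Hmgk.dist_eq`.
theorem card_filter_eq_eq_one [Fintype α] (u : α) [DecidablePred (· = u)] :
    (univ.filter (· = u)).card = 1 :=
  card_eq_one.2 ⟨u, by ext; simp⟩

theorem natCast_card_filter_and_ne [Fintype α] {p : α → Prop} [DecidablePred p] {u : α}
    (hu : p u) [DecidablePred fun x => p x ∧ ¬x = u] :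
    ((univ.filter fun x => p x ∧ ¬x = u).card : ℤ) = (univ.filter p).card - 1 := by
  classical
  have h : (univ.filter fun x => p x ∧ ¬x = u) = (univ.filter p).erase u := by
    ext; simp [and_comm]
  rw [h, ← card_erase_add_one (mem_filter.2 ⟨mem_univ u, hu⟩)]
  push_cast
  ring

theorem natCast_card_filter_ne_imp_not [Fintype α] {p : α → Prop} [DecidablePred p] {u : α}
    (hu : p u) [DecidablePred fun x => ¬x = u → ¬p x] :
    ((univ.filter fun x => ¬x = u → ¬p x).card : ℤ) =
      Fintype.card α - (univ.filter p).card + 1 := by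
  classical
  have h : (univ.filter fun x => ¬x = u → ¬p x) = univ.filter fun x => ¬(p x ∧ ¬x = u) := by
    ext; simp [imp_not_comm]
  rw [h, natCast_card_filter_not, natCast_card_filter_and_ne hu, card_univ]
  ring

end Finset

namespace Hmgk

variable {β γ : Type*} {G : SimpleGraph (β ⊕ γ)} {m k : ℕ}

abbrev a (i : Fin m) : Fin m ⊕ (β ⊕ γ) ⊕ Fin k := .inl i
abbrev b (u : β) : Fin m ⊕ (β ⊕ γ) ⊕ Fin k := .inr (.inl (.inl u))
abbrev c (v : γ) : Fin m ⊕ (β ⊕ γ) ⊕ Fin k := .inr (.inl (.inr v))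
abbrev d (j : Fin k) : Fin m ⊕ (β ⊕ γ) ⊕ Fin k := .inr (.inr j)

def layer : Fin m ⊕ (β ⊕ γ) ⊕ Fin k → ℕ
  | .inl _ => 0
  | .inr (.inl (.inl _)) => 1
  | .inr (.inl (.inr _)) => 2
  | .inr (.inr _) => 3

variable (hbipB : ∀ b b' : β, ¬ G.Adj (.inl b) (.inl b'))
  (hbipC : ∀ c c' : γ, ¬ G.Adj (.inr c) (.inr c'))
  (hB : ∀ u : β, ∃ v : γ, G.Adj (.inl u) (.inr v))
  (hC : ∀ v : γ, ∃ u : β, G.Adj (.inl u) (.inr v))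

include hbipB hbipC in
theorem adj_layer ⦃x y : Fin m ⊕ (β ⊕ γ) ⊕ Fin k⦄ (h : (Hmgk G m k).Adj x y) :
    layer x + 1 = layer y ∨ layer y + 1 = layer x := by
  rcases x with _ | ((u | v) | _) <;> rcases y with _ | ((u' | v') | _) <;>
    simp_all [Hmgk, layer]

variable [Nonempty β] [NeZero m] [NeZero k]

include hB hC in
theorem exists_walk_length_le_three (x y : Fin m ⊕ (β ⊕ γ) ⊕ Fin k) :
    ∃ p : (Hmgk G m k).Walk x y, p.length ≤ 3 := by
  wlog hxy : layer x ≤ layer y generalizing x y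
  · obtain ⟨p, hp⟩ := this y x (by omega)
    exact ⟨p.reverse, by simpa⟩
  obtain ⟨u₀⟩ := ‹Nonempty β›
  obtain ⟨v₀, h₀⟩ := hB u₀
  let H := Hmgk G m k
  have path1 {x y} (h : H.Adj x y) : ∃ p : H.Walk x y, p.length ≤ 3 := ⟨h.toWalk, by simp⟩
  have path2 {x z y} (h₁ : H.Adj x z) (h₂ : H.Adj z y) : ∃ p : H.Walk x y, p.length ≤ 3 :=
    ⟨.cons h₁ (.cons h₂ .nil), by simp⟩
  have path3 {x z w y} (h₁ : H.Adj x z) (h₂ : H.Adj z w) (h₃ : H.Adj w y) :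
      ∃ p : H.Walk x y, p.length ≤ 3 :=
    ⟨.cons h₁ (.cons h₂ (.cons h₃ .nil)), by simp⟩
  rcases x with i | ((u | v) | j) <;> rcases y with i' | ((u' | v') | j') <;>
    simp only [layer] at hxy <;> try omega
  · exact path2 (z := b u₀) trivial trivial
  · exact path1 trivial
  · obtain ⟨u, hu⟩ := hC v'
    exact path2 (z := b u) trivial hu
  · exact path3 (z := b u₀) (w := c v₀) trivial h₀ trivial
  · exact path2 (z := a 0) trivial trivial
  · by_cases h : G.Adj (.inl u) (.inr v')
    · exact path1 h
    · obtain ⟨u', hu'⟩ := hC v'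
      exact path3 (z := a 0) (w := b u') trivial trivial hu'
  · obtain ⟨v, hv⟩ := hB u
    exact path2 (z := c v) hv trivial
  · exact path2 (z := d 0) trivial trivial
  · exact path1 trivial
  · exact path2 (z := c v₀) trivial trivial

include hbipB hbipC hB hC

open Classical in
theorem dist_eq (x y : Fin m ⊕ (β ⊕ γ) ⊕ Fin k) :
    (Hmgk G m k).dist x y =
      if x = y then 0 else if (Hmgk G m k).Adj x y then 1
      else if Even (layer x + layer y) then 2 else 3 := by
  obtain ⟨p, hp⟩ := exists_walk_length_le_three hB hC x y
  have hle := SimpleGraph.dist_le p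
  have hpar := SimpleGraph.Reachable.even_dist_add_of_adj (adj_layer hbipB hbipC) ⟨p⟩
  rw [Nat.even_iff] at hpar
  split_ifs with hxy hadj heven
  · simp [hxy]
  · exact SimpleGraph.dist_eq_one_iff_adj.2 hadj
  all_goals
    have h0 := SimpleGraph.Reachable.pos_dist_of_ne ⟨p⟩ hxy
    have h1 := mt SimpleGraph.dist_eq_one_iff_adj.1 hadj
    rw [Nat.even_iff] at heven
    omega

variable [Fintype β] [Fintype γ] [DecidableRel G.Adj]

-- Each count splits the vertex set into its four parts and evaluates `dist_eq` pointwise.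
theorem ncard_wSet_a_b (i : Fin m) (u : β) :
    ((wSet (Hmgk G m k) (a i) (b u)).ncard : ℤ) =
      Fintype.card β + Fintype.card γ - G.degree (.inl u) := by
  classical
  simp only [wSet, Set.ncard_eq_toFinset_card', Set.toFinset_ofPred, Finset.card_filter,
    Fintype.sum_sum_type, a, b, dist_eq hbipB hbipC hB hC]
  simp [Hmgk, layer, parity_simps, fun c : ℕ => apply_ite (· < c),
    fun c : ℕ => apply_ite (c < ·), hbipB, G.adj_comm (.inr _),
    SimpleGraph.degree_inl_eq_card_filter hbipB,
    Finset.sum_ite_zero_one, Finset.card_filter_eq_eq_one]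
  ring

theorem ncard_wSet_b_a (i : Fin m) (u : β) :
    ((wSet (Hmgk G m k) (b u) (a i)).ncard : ℤ) =
      m + k + G.degree (.inl u) := by
  classical
  simp only [wSet, Set.ncard_eq_toFinset_card', Set.toFinset_ofPred, Finset.card_filter,
    Fintype.sum_sum_type, a, b, dist_eq hbipB hbipC hB hC]
  simp [Hmgk, layer, parity_simps, fun c : ℕ => apply_ite (· < c),
    fun c : ℕ => apply_ite (c < ·), hbipB, G.adj_comm (.inr _),
    SimpleGraph.degree_inl_eq_card_filter hbipB,
    Finset.sum_ite_zero_one, Finset.card_filter_eq_eq_one]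
  ring

theorem ncard_wSet_b_c {u : β} {v : γ} (huv : G.Adj (.inl u) (.inr v)) :
    ((wSet (Hmgk G m k) (b u) (c v)).ncard : ℤ) =
      m + Fintype.card β + G.degree (.inl u) - G.degree (.inr v) := by
  classical
  simp only [wSet, Set.ncard_eq_toFinset_card', Set.toFinset_ofPred, Finset.card_filter,
    Fintype.sum_sum_type, b, c, dist_eq hbipB hbipC hB hC]
  simp [Hmgk, layer, parity_simps, fun c : ℕ => apply_ite (· < c),
    fun c : ℕ => apply_ite (c < ·), hbipB, hbipC, G.adj_comm (.inr _),
    SimpleGraph.degree_inl_eq_card_filter hbipB, SimpleGraph.degree_inr_eq_card_filter hbipC,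
    Finset.natCast_card_filter_and_ne (p := fun x => G.Adj (.inl u) (.inr x)) huv,
    Finset.natCast_card_filter_ne_imp_not (p := fun x => G.Adj (.inl x) (.inr v)) huv]
  ring

theorem ncard_wSet_c_b {u : β} {v : γ} (huv : G.Adj (.inl u) (.inr v)) :
    ((wSet (Hmgk G m k) (c v) (b u)).ncard : ℤ) =
      k + Fintype.card γ + G.degree (.inr v) - G.degree (.inl u) := by
  classical
  simp only [wSet, Set.ncard_eq_toFinset_card', Set.toFinset_ofPred, Finset.card_filter,
    Fintype.sum_sum_type, b, c, dist_eq hbipB hbipC hB hC]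
  simp [Hmgk, layer, parity_simps, fun c : ℕ => apply_ite (· < c),
    fun c : ℕ => apply_ite (c < ·), hbipB, hbipC, G.adj_comm (.inr _),
    SimpleGraph.degree_inl_eq_card_filter hbipB, SimpleGraph.degree_inr_eq_card_filter hbipC,
    Finset.natCast_card_filter_and_ne (p := fun x => G.Adj (.inl x) (.inr v)) huv,
    Finset.natCast_card_filter_ne_imp_not (p := fun x => G.Adj (.inl u) (.inr x)) huv]
  ring

theorem ncard_wSet_c_d (v : γ) (j : Fin k) :
    ((wSet (Hmgk G m k) (c v) (d j)).ncard : ℤ) =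
      k + m + G.degree (.inr v) := by
  classical
  simp only [wSet, Set.ncard_eq_toFinset_card', Set.toFinset_ofPred, Finset.card_filter,
    Fintype.sum_sum_type, c, d, dist_eq hbipB hbipC hB hC]
  simp [Hmgk, layer, parity_simps, fun c : ℕ => apply_ite (· < c),
    fun c : ℕ => apply_ite (c < ·), hbipC, SimpleGraph.degree_inr_eq_card_filter hbipC,
    Finset.sum_ite_zero_one, Finset.card_filter_eq_eq_one]
  ring

theorem ncard_wSet_d_c (v : γ) (j : Fin k) :
    ((wSet (Hmgk G m k) (d j) (c v)).ncard : ℤ) =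
      Fintype.card β + Fintype.card γ - G.degree (.inr v) := by
  classical
  simp only [wSet, Set.ncard_eq_toFinset_card', Set.toFinset_ofPred, Finset.card_filter,
    Fintype.sum_sum_type, c, d, dist_eq hbipB hbipC hB hC]
  simp [Hmgk, layer, parity_simps, fun c : ℕ => apply_ite (· < c),
    fun c : ℕ => apply_ite (c < ·), hbipC, SimpleGraph.degree_inr_eq_card_filter hbipC,
    Finset.sum_ite_zero_one, Finset.card_filter_eq_eq_one]
  ring

theorem distBalanced_iff {t₁ t₂ : ℕ} (hregB : ∀ u : β, G.degree (.inl u) = t₁)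
    (hregC : ∀ v : γ, G.degree (.inr v) = t₂) :
    DistBalanced (Hmgk G m k) ↔
      ((Fintype.card β + Fintype.card γ - t₁ : ℤ) = m + k + t₁ ∧
        (m + Fintype.card β + t₁ - t₂ : ℤ) = k + Fintype.card γ + t₂ - t₁ ∧
        (k + m + t₂ : ℤ) = Fintype.card β + Fintype.card γ - t₂) := by
  have hab := ncard_wSet_a_b (m := m) (k := k) hbipB hbipC hB hC
  have hba := ncard_wSet_b_a (m := m) (k := k) hbipB hbipC hB hC
  have hbc {u v} := ncard_wSet_b_c (m := m) (k := k) hbipB hbipC hB hC (u := u) (v := v)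
  have hcb {u v} := ncard_wSet_c_b (m := m) (k := k) hbipB hbipC hB hC (u := u) (v := v)
  have hcd := ncard_wSet_c_d (m := m) (k := k) hbipB hbipC hB hC
  have hdc := ncard_wSet_d_c (m := m) (k := k) hbipB hbipC hB hC
  simp only [hregB, hregC] at hab hba hbc hcb hcd hdc
  constructor
  · intro h
    obtain ⟨u₀⟩ := ‹Nonempty β›
    obtain ⟨v₀, h₀⟩ := hB u₀
    have e₁ := congrArg (Nat.cast : ℕ → ℤ) (h (a 0) (b u₀) trivial)
    have e₂ := congrArg (Nat.cast : ℕ → ℤ) (h (b u₀) (c v₀) h₀)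
    have e₃ := congrArg (Nat.cast : ℕ → ℤ) (h (c v₀) (d 0) trivial)
    rw [hab, hba] at e₁
    rw [hbc h₀, hcb h₀] at e₂
    rw [hcd, hdc] at e₃
    exact ⟨e₁, e₂, e₃⟩
  · rintro ⟨e₁, e₂, e₃⟩ x y hxy
    apply Nat.cast_injective (R := ℤ)
    rcases x with i | ((u | v) | j) <;> rcases y with i' | ((u' | v') | j') <;>
      simp only [Hmgk, hbipB, hbipC] at hxy
    · rw [hab, hba]; linarith
    · rw [hab, hba]; linarith
    · rw [hbc hxy, hcb hxy]; linarith
    · rw [hbc hxy.symm, hcb hxy.symm]; linarith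
    · rw [hcd, hdc]; linarith
    · rw [hcd, hdc]; linarith

end Hmgk

theorem stmt14_general {β γ : Type*} [Fintype β] [Fintype γ]
    (G : SimpleGraph (β ⊕ γ)) [DecidableRel G.Adj]
    (t₁ t₂ m k : ℕ)
    (hne : G ≠ ⊥)
    (hbipB : ∀ b b' : β, ¬ G.Adj (.inl b) (.inl b'))
    (hbipC : ∀ c c' : γ, ¬ G.Adj (.inr c) (.inr c'))
    (hregB : ∀ b : β, G.degree (.inl b) = t₁)
    (hregC : ∀ c : γ, G.degree (.inr c) = t₂)
    (hm : 1 ≤ m) (hk : 1 ≤ k) :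
    DistBalanced (Hmgk G m k) ↔
      (t₁ = t₂ ∧ (t₁ : ℚ) = (Fintype.card β : ℚ) - k ∧
        (t₁ : ℚ) = (Fintype.card γ : ℚ) - m) := by
  obtain ⟨u₀, v₀, h₀⟩ := SimpleGraph.exists_adj_inl_inr_of_ne_bot hne hbipB hbipC
  have hB (u : β) : ∃ v, G.Adj (.inl u) (.inr v) := by
    refine SimpleGraph.exists_adj_inr_of_degree_pos hbipB ?_
    rw [hregB, ← hregB u₀, G.degree_pos_iff_exists_adj]
    exact ⟨_, h₀⟩
  have hC (v : γ) : ∃ u, G.Adj (.inl u) (.inr v) := by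
    refine SimpleGraph.exists_adj_inl_of_degree_pos hbipC ?_
    rw [hregC, ← hregC v₀, G.degree_pos_iff_exists_adj]
    exact ⟨_, h₀.symm⟩
  have : Nonempty β := ⟨u₀⟩
  have : NeZero m := ⟨by omega⟩
  have : NeZero k := ⟨by omega⟩
  rw [Hmgk.distBalanced_iff hbipB hbipC hB hC hregB hregC]
  constructor
  · rintro ⟨e₁, e₂, e₃⟩
    have h₁ : (t₁ : ℤ) = Fintype.card β - k := by omega
    have h₂ : (t₁ : ℤ) = Fintype.card γ - m := by omega
    exact ⟨by omega, by exact_mod_cast h₁, by exact_mod_cast h₂⟩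
  · rintro ⟨rfl, h₁, h₂⟩
    have h₁' : (t₁ : ℤ) = Fintype.card β - k := by exact_mod_cast h₁
    have h₂' : (t₁ : ℤ) = Fintype.card γ - m := by exact_mod_cast h₂
    omega

/-- `H(m, G, k)` built on a nonempty `(t₁, t₂)`-biregular bipartite graph `G`
with parts of sizes `n₁ = |β|`, `n₂ = |γ|` is distance-balanced iff
`t₁ = t₂ = n₁ − k = n₂ − m`. -/
theorem stmt14 {β γ : Type*} [Fintype β] [Fintype γ]
    (G : SimpleGraph (β ⊕ γ)) [DecidableRel G.Adj]
    (t₁ t₂ m k : ℕ)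
    (hne : G ≠ ⊥)
    (hbipB : ∀ b b' : β, ¬ G.Adj (.inl b) (.inl b'))
    (hbipC : ∀ c c' : γ, ¬ G.Adj (.inr c) (.inr c'))
    (hregB : ∀ b : β, G.degree (.inl b) = t₁)
    (hregC : ∀ c : γ, G.degree (.inr c) = t₂)
    (hm : 1 ≤ m) (hk : 1 ≤ k)
    (horder : Fintype.card β + m ≤ Fintype.card γ + k) :
    DistBalanced (Hmgk G m k) ↔
      (t₁ = t₂ ∧ (t₁ : ℚ) = (Fintype.card β : ℚ) - k ∧
        (t₁ : ℚ) = (Fintype.card γ : ℚ) - m) :=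
  stmt14_general G t₁ t₂ m k hne hbipB hbipC hregB hregC hm hk
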